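/- arXiv:0706.0725 — 2 statements merged into one kernel-verified Lean document; each statement's English description precedes it below -/
import Mathlib

section
/- Let p be an odd prime, m ≥ ν ≥ 1, and α, β integers coprime to p. If f(x) = p^{2ν} + pᵐβx + αx² is reducible in ℤ[[x]], then f̂(x) = p² + p^{m−ν+1}βx + αx² is reducible in ℤ[[x]]. -/
/-!
Write `f = a * b` with non-units `a, b`. Comparing coefficients, `a₀ b₀ = p ^ (2ν)` makes `p` divide
both `a₀` and `b₀`, so `p ∤ α = a₀ b₂ + a₁ b₁ + a₂ b₀` gives `p ∤ a₁ b₁`; then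
`a₁ b₀ + b₁ a₀ = p ^ m β` with `m ≥ ν` forces `p ^ ν` to divide both `a₀` and `b₀`.
With `c = p ^ (ν - 1)`, the substitution `x ↦ c x` turns `f` into `c² f̂`, and `a, b` into
`c A, c B` since `c` divides their constant terms. Cancelling `c²` gives `f̂ = A B`, where
`A(0) = a₀ / c` and `B(0) = b₀ / c` are still divisible by `p`.
-/

open PowerSeries Finset

theorem Prime.dvd_of_dvd_pow_of_not_isUnit {M : Type*} [CommMonoidWithZero M] [IsCancelMulZero M]
    {p q : M} (hp : Prime p) {n : ℕ} (hq : q ∣ p ^ n) (hu : ¬IsUnit q) : p ∣ q := by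
  obtain ⟨i, -, hi⟩ := (dvd_prime_pow hp n).1 hq
  rcases i with _ | i
  · exact absurd (associated_one_iff_isUnit.1 (by simpa using hi)) hu
  · exact (dvd_pow_self p i.succ_ne_zero).trans hi.symm.dvd

/-- If `a * b = p ^ (2 * ν)` and `a` carried fewer than `ν` factors `p`, then `b` would carry more,
and `y * a` would be the only summand of `x * b + y * a` not divisible by that power plus one. -/
theorem Prime.pow_dvd_of_mul_eq_pow_two_mul {R : Type*} [CommRing R] [IsDomain R]
    {p a b x y : R} (hp : Prime p) {ν : ℕ} (hab : a * b = p ^ (2 * ν))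
    (hsum : p ^ ν ∣ x * b + y * a) (hy : ¬p ∣ y) : p ^ ν ∣ a := by
  obtain ⟨i, -, hi⟩ := (dvd_prime_pow hp _).1 (Dvd.intro b hab)
  obtain ⟨u, rfl⟩ := hi.symm
  by_contra hν
  have hiν : i < ν := by
    by_contra! h
    exact hν ((pow_dvd_pow p h).trans (Dvd.intro _ rfl))
  have hub : ↑u * b = p ^ (i + 1) * p ^ (2 * ν - (2 * i + 1)) := by
    refine mul_left_cancel₀ (pow_ne_zero i hp.ne_zero) ?_
    rw [← mul_assoc, hab, ← pow_add, ← pow_add]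
    congr 1
    omega
  have hb : p ^ (i + 1) ∣ b := (Units.dvd_mul_left).1 (Dvd.intro _ hub.symm)
  have hya : p ^ (i + 1) ∣ y * (p ^ i * u) :=
    (dvd_add_right (hb.mul_left x)).1 ((pow_dvd_pow p hiν).trans hsum)
  rw [pow_succ, mul_left_comm, mul_dvd_mul_iff_left (pow_ne_zero i hp.ne_zero)] at hya
  exact hy ((Units.dvd_mul_right).1 hya)

section PowerSeries

variable {R : Type*}

theorem PowerSeries.coeff_two_mul [CommSemiring R] (φ ψ : R⟦X⟧) :
    coeff 2 (φ * ψ) =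
      constantCoeff φ * coeff 2 ψ + coeff 1 φ * coeff 1 ψ + coeff 2 φ * constantCoeff ψ := by
  rw [coeff_mul, show antidiagonal 2 = {(0, 2), (1, 1), (2, 0)} from rfl,
    sum_insert (by decide), sum_insert (by decide), sum_singleton,
    coeff_zero_eq_constantCoeff, add_assoc]

theorem PowerSeries.rescale_quadratic [CommSemiring R] (c r s t : R) :
    rescale c (C r + C s * X + C t * X ^ 2) = C r + C (s * c) * X + C (t * c ^ 2) * X ^ 2 := by
  ext n
  simp only [coeff_rescale, map_add, coeff_C, coeff_C_mul, coeff_X, coeff_X_pow]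
  rcases n with _ | _ | _ | n <;> simp [mul_comm]

theorem PowerSeries.exists_rescale_eq_C_mul [CommSemiring R] (c : R) {a : R⟦X⟧} {d : R}
    (hd : constantCoeff a = c * d) : ∃ A : R⟦X⟧, constantCoeff A = d ∧ rescale c a = C c * A := by
  refine ⟨mk fun k => if k = 0 then d else coeff k a * c ^ (k - 1), by simp, ?_⟩
  ext (_ | k)
  · simpa using hd
  · simp [coeff_rescale, pow_succ', mul_comm, mul_assoc]

variable [CommRing R] [IsDomain R]

theorem PowerSeries.exists_mul_eq_of_rescale_eq_C_sq_mul {c d e : R} (hc : c ≠ 0)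
    {f g a b : R⟦X⟧} (hfg : rescale c f = C (c ^ 2) * g) (hf : f = a * b)
    (ha : constantCoeff a = c * d) (hb : constantCoeff b = c * e) :
    ∃ A B : R⟦X⟧, constantCoeff A = d ∧ constantCoeff B = e ∧ g = A * B := by
  obtain ⟨A, hA₀, hA⟩ := exists_rescale_eq_C_mul c ha
  obtain ⟨B, hB₀, hB⟩ := exists_rescale_eq_C_mul c hb
  refine ⟨A, B, hA₀, hB₀,
    mul_left_cancel₀ ((map_ne_zero_iff _ C_injective).2 (pow_ne_zero 2 hc)) ?_⟩
  rw [← hfg, hf, map_mul, hA, hB, map_pow]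
  ring

theorem PowerSeries.pow_dvd_constantCoeff_of_quadratic_eq_mul {p s t : R} (hp : Prime p) {ν : ℕ}
    (hs : p ^ ν ∣ s) (ht : ¬p ∣ t) {a b : R⟦X⟧} (ha : ¬IsUnit a) (hb : ¬IsUnit b)
    (hab : C (p ^ (2 * ν)) + C s * X + C t * X ^ 2 = a * b) : p ^ ν ∣ constantCoeff a := by
  have h₀ : constantCoeff a * constantCoeff b = p ^ (2 * ν) := by
    simpa using (congrArg constantCoeff hab).symm
  have h₁ : coeff 1 a * constantCoeff b + coeff 1 b * constantCoeff a = s := by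
    simpa [-map_pow, coeff_one_mul, coeff_X_pow, coeff_C] using (congrArg (coeff 1) hab).symm
  have h₂ : constantCoeff a * coeff 2 b + coeff 1 a * coeff 1 b
      + coeff 2 a * constantCoeff b = t := by
    simpa [-map_pow, coeff_two_mul, coeff_X, coeff_C] using (congrArg (coeff 2) hab).symm
  have hpa : p ∣ constantCoeff a :=
    hp.dvd_of_dvd_pow_of_not_isUnit (Dvd.intro _ h₀) (mt isUnit_iff_constantCoeff.2 ha)
  have hpb : p ∣ constantCoeff b :=
    hp.dvd_of_dvd_pow_of_not_isUnit (Dvd.intro_left _ h₀) (mt isUnit_iff_constantCoeff.2 hb)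
  have hb₁ : ¬p ∣ coeff 1 b := fun hd ↦ ht <| h₂ ▸
    dvd_add (dvd_add (hpa.mul_right _) (hd.mul_left _)) (hpb.mul_left _)
  exact hp.pow_dvd_of_mul_eq_pow_two_mul h₀ (h₁ ▸ hs) hb₁

end PowerSeries

theorem stmt_10_general (p : ℕ) (hp : p.Prime) (ν m : ℕ)
    (hν : 1 ≤ ν) (hm : ν ≤ m) (α β : ℤ)
    (hα : Int.gcd (p : ℤ) α = 1)
    (h : ∃ a b : PowerSeries ℤ, ¬ IsUnit a ∧ ¬ IsUnit b ∧
      (PowerSeries.C : ℤ →+* PowerSeries ℤ) ((p : ℤ) ^ (2 * ν)) +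
        (PowerSeries.C : ℤ →+* PowerSeries ℤ) ((p : ℤ) ^ m * β) * PowerSeries.X +
        (PowerSeries.C : ℤ →+* PowerSeries ℤ) α * PowerSeries.X ^ 2 = a * b) :
    ∃ a b : PowerSeries ℤ, ¬ IsUnit a ∧ ¬ IsUnit b ∧
      (PowerSeries.C : ℤ →+* PowerSeries ℤ) ((p : ℤ) ^ 2) +
        (PowerSeries.C : ℤ →+* PowerSeries ℤ) ((p : ℤ) ^ (m - ν + 1) * β) * PowerSeries.X +
        (PowerSeries.C : ℤ →+* PowerSeries ℤ) α * PowerSeries.X ^ 2 = a * b := by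
  obtain ⟨a, b, ha, hb, hf⟩ := h
  have hp' : Prime (p : ℤ) := Nat.prime_iff_prime_int.1 hp
  have hpα : ¬(p : ℤ) ∣ α := fun hd ↦
    hp'.not_isUnit ((Int.isCoprime_iff_gcd_eq_one.2 hα).isUnit_of_dvd' dvd_rfl hd)
  have hs : (p : ℤ) ^ ν ∣ p ^ m * β := (pow_dvd_pow _ hm).mul_right _
  obtain ⟨a', ha'⟩ := pow_dvd_constantCoeff_of_quadratic_eq_mul hp' hs hpα ha hb hf
  obtain ⟨b', hb'⟩ := pow_dvd_constantCoeff_of_quadratic_eq_mul hp' hs hpα hb ha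
    (hf.trans (mul_comm a b))
  obtain ⟨n, rfl⟩ := Nat.exists_eq_add_of_le' hν
  obtain ⟨k, rfl⟩ := Nat.exists_eq_add_of_le hm
  rw [show n + 1 + k - (n + 1) + 1 = k + 1 by omega]
  obtain ⟨A, B, hA₀, hB₀, hAB⟩ : ∃ A B : ℤ⟦X⟧, constantCoeff A = p * a' ∧ constantCoeff B = p * b' ∧
      C ((p : ℤ) ^ 2) + C ((p : ℤ) ^ (k + 1) * β) * X + C α * X ^ 2 = A * B :=
    exists_mul_eq_of_rescale_eq_C_sq_mul (pow_ne_zero n hp'.ne_zero)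
      (by rw [rescale_quadratic]; simp only [map_mul, map_pow]; ring) hf
      (by rw [ha']; ring) (by rw [hb']; ring)
  refine ⟨A, B, fun hu ↦ ?_, fun hu ↦ ?_, hAB⟩
  · exact hp'.not_isUnit (isUnit_of_mul_isUnit_left (hA₀ ▸ isUnit_constantCoeff A hu))
  · exact hp'.not_isUnit (isUnit_of_mul_isUnit_left (hB₀ ▸ isUnit_constantCoeff B hu))

theorem stmt_10 (p : ℕ) (hp : p.Prime) (hodd : Odd p) (ν m : ℕ)
    (hν : 1 ≤ ν) (hm : ν ≤ m) (α β : ℤ)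
    (hα : Int.gcd (p : ℤ) α = 1) (hβ : Int.gcd (p : ℤ) β = 1)
    (h : ∃ a b : PowerSeries ℤ, ¬ IsUnit a ∧ ¬ IsUnit b ∧
      (PowerSeries.C : ℤ →+* PowerSeries ℤ) ((p : ℤ) ^ (2 * ν)) +
        (PowerSeries.C : ℤ →+* PowerSeries ℤ) ((p : ℤ) ^ m * β) * PowerSeries.X +
        (PowerSeries.C : ℤ →+* PowerSeries ℤ) α * PowerSeries.X ^ 2 = a * b) :
    ∃ a b : PowerSeries ℤ, ¬ IsUnit a ∧ ¬ IsUnit b ∧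
      (PowerSeries.C : ℤ →+* PowerSeries ℤ) ((p : ℤ) ^ 2) +
        (PowerSeries.C : ℤ →+* PowerSeries ℤ) ((p : ℤ) ^ (m - ν + 1) * β) * PowerSeries.X +
        (PowerSeries.C : ℤ →+* PowerSeries ℤ) α * PowerSeries.X ^ 2 = a * b :=
  stmt_10_general p hp ν m hν hm α β hα h
end

section
/- Let p be an odd prime, ℓ ≥ 1, and α, β integers coprime to p. If the polynomial p² + p^ℓβx + αx² is reducible in ℤ[[x]], then it is reducible in ℤ_p[x]; equivalently, its discriminant p^{2ℓ}β² − 4αp² is a square in the p-adic integers ℤ_p. -/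
/-!
Since `a(0) * b(0) = p²` and neither factor is a unit, `p` divides both constant terms, and
comparing `x²`-coefficients modulo `p` shows that the linear coefficient of `a` is prime to `p`.
Hensel's lemma then gives, for every `N`, a root `z ∈ pℤ_p` of the truncation of `a` below
degree `N`; since `a * b` agrees with the product of truncations below degree `N`, the quadratic
`Q = p² + p^ℓ β x + α x²` satisfies `‖Q(z)‖ ≤ ‖z‖^N ≤ p^(-N)`. By compactness of `ℤ_p`, `Q` has a
root `r`, so `Q = (x - r)(α x + α r + p^ℓ β)` and its discriminant is `(2 α r + p^ℓ β)²`.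
-/

open Polynomial

theorem Prime.dvd_of_mul_eq_pow {M : Type*} [CommMonoidWithZero M] [IsCancelMulZero M]
    {q x y : M} {n : ℕ} (hq : Prime q) (hxy : x * y = q ^ n) (hx : ¬IsUnit x) : q ∣ x := by
  obtain ⟨i, -, hi⟩ := (dvd_prime_pow hq n).mp ⟨y, hxy.symm⟩
  rcases i with _ | i
  · exact absurd (hi.isUnit_iff.mpr (pow_zero q ▸ isUnit_one)) hx
  · exact (dvd_pow_self q i.succ_ne_zero).trans hi.symm.dvd

theorem PowerSeries.X_pow_dvd_trunc_mul_trunc_sub_trunc {R : Type*} [CommRing R]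
    (f g : PowerSeries R) (n : ℕ) :
    (Polynomial.X ^ n : R[X]) ∣ trunc n f * trunc n g - trunc n (f * g) := by
  refine Polynomial.X_pow_dvd_iff.mpr fun d hd => ?_
  rw [Polynomial.coeff_sub, ← trunc_trunc_mul_trunc, coeff_trunc, if_pos hd,
    ← Polynomial.coe_mul, Polynomial.coeff_coe, sub_self]

theorem PowerSeries.coeff_two_mul_s11 {R : Type*} [CommRing R] (f g : PowerSeries R) :
    coeff 2 (f * g) = constantCoeff f * coeff 2 g + coeff 1 f * coeff 1 g
      + coeff 2 f * constantCoeff g := by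
  simp [coeff_mul, Finset.Nat.antidiagonal_succ, add_assoc]

theorem PowerSeries.dvd_constantCoeff_and_not_dvd_coeff_one_of_mul {R : Type*} [CommRing R]
    [IsDomain R] {q : R} (hq : Prime q) {a b : PowerSeries R} (ha : ¬IsUnit a) (hb : ¬IsUnit b)
    (h₀ : constantCoeff (a * b) = q ^ 2) (h₂ : ¬q ∣ coeff 2 (a * b)) :
    q ∣ constantCoeff a ∧ ¬q ∣ coeff 1 a := by
  rw [map_mul] at h₀
  have ha₀ := hq.dvd_of_mul_eq_pow h₀ (mt isUnit_iff_constantCoeff.mpr ha)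
  have hb₀ := hq.dvd_of_mul_eq_pow ((mul_comm _ _).trans h₀) (mt isUnit_iff_constantCoeff.mpr hb)
  refine ⟨ha₀, fun ha₁ => h₂ ?_⟩
  rw [coeff_two_mul_s11]
  exact dvd_add (dvd_add (ha₀.mul_right _) (ha₁.mul_right _)) (hb₀.mul_left _)

theorem exists_eq_zero_of_forall_exists_norm_lt {X E : Type*} [TopologicalSpace X]
    [CompactSpace X] [NormedAddCommGroup E] {f : X → E} (hf : Continuous f)
    (h : ∀ ε > 0, ∃ x, ‖f x‖ < ε) : ∃ x, f x = 0 := by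
  obtain ⟨x₀, -⟩ := h 1 one_pos
  obtain ⟨x, hmin⟩ := hf.norm.exists_forall_le' x₀ (by simp)
  refine ⟨x, norm_le_zero_iff.mp (le_of_forall_pos_le_add fun ε hε => ?_)⟩
  obtain ⟨y, hy⟩ := h ε hε
  linarith [hmin y]

namespace PadicInt

variable {p : ℕ} [Fact p.Prime]

theorem exists_norm_lt_one_aeval_trunc_eq_zero {a : PowerSeries ℤ}
    (ha₀ : (p : ℤ) ∣ PowerSeries.constantCoeff a) (ha₁ : ¬(p : ℤ) ∣ PowerSeries.coeff 1 a)
    {N : ℕ} (hN : 2 ≤ N) : ∃ z : ℤ_[p], ‖z‖ < 1 ∧ aeval z (PowerSeries.trunc N a) = 0 := by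
  have h₀ : aeval (0 : ℤ_[p]) (PowerSeries.trunc N a) = (PowerSeries.constantCoeff a : ℤ) := by
    rw [← coeff_zero_eq_aeval_zero', PowerSeries.coeff_trunc, if_pos (by omega),
      PowerSeries.coeff_zero_eq_constantCoeff_apply, eq_intCast]
  have h₁ : aeval (0 : ℤ_[p]) (derivative (PowerSeries.trunc N a)) =
      (PowerSeries.coeff 1 a : ℤ) := by
    rw [← coeff_zero_eq_aeval_zero', coeff_derivative, PowerSeries.coeff_trunc, if_pos (by omega)]
    simp
  have hnorm₁ : ‖aeval (0 : ℤ_[p]) (derivative (PowerSeries.trunc N a))‖ = 1 := by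
    rw [h₁]
    exact le_antisymm (norm_le_one _) (not_lt.mp ((norm_int_lt_one_iff_dvd _).not.mpr ha₁))
  obtain ⟨z, hz, hlt, -⟩ := hensels_lemma (F := PowerSeries.trunc N a) (a := (0 : ℤ_[p]))
    (by rw [h₀, hnorm₁, one_pow]; exact (norm_int_lt_one_iff_dvd _).mpr ha₀)
  exact ⟨z, by simpa [hnorm₁] using hlt, hz⟩

theorem exists_aeval_eq_zero_of_mul_eq {a b : PowerSeries ℤ} {F : ℤ[X]} (hab : a * b = F)
    (ha₀ : (p : ℤ) ∣ PowerSeries.constantCoeff a) (ha₁ : ¬(p : ℤ) ∣ PowerSeries.coeff 1 a) :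
    ∃ z : ℤ_[p], aeval z F = 0 := by
  have hp : (1 : ℝ) < p := by exact_mod_cast (Fact.out : p.Prime).one_lt
  refine exists_eq_zero_of_forall_exists_norm_lt F.continuous_aeval fun ε hε => ?_
  obtain ⟨n, hn⟩ := exists_pow_lt_of_lt_one hε (inv_lt_one_of_one_lt₀ hp)
  set N := n + F.natDegree + 2
  obtain ⟨z, hz, hroot⟩ := exists_norm_lt_one_aeval_trunc_eq_zero ha₀ ha₁ (N := N) (by omega)
  have hz' : ‖z‖ ≤ (p : ℝ)⁻¹ := by
    simpa using (norm_le_pow_iff_norm_lt_pow_add_one z (-1)).mpr (by simpa using hz)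
  obtain ⟨D, hD⟩ := PowerSeries.X_pow_dvd_trunc_mul_trunc_sub_trunc a b N
  rw [hab, PowerSeries.trunc_coe_eq_self (by omega)] at hD
  have hFz : aeval z F = -(z ^ N * aeval z D) := by
    have := congrArg (aeval z) hD
    simp only [map_sub, map_mul, map_pow, aeval_X, hroot, zero_mul] at this
    linear_combination -this
  refine ⟨z, ?_⟩
  calc ‖aeval z F‖ ≤ ‖z‖ ^ N := by
        rw [hFz, norm_neg, norm_mul, norm_pow]
        exact mul_le_of_le_one_right (by positivity) (norm_le_one _)
    _ ≤ (p : ℝ)⁻¹ ^ N := pow_le_pow_left₀ (norm_nonneg _) hz' N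
    _ ≤ (p : ℝ)⁻¹ ^ n := pow_le_pow_of_le_one (by positivity) (inv_le_one_of_one_le₀ hp.le) (by omega)
    _ < ε := hn

end PadicInt

theorem Polynomial.exists_factorization_and_isSquare_discrim_of_root {R : Type*} [CommRing R]
    [IsDomain R] {a b c r : R} (ha : a ≠ 0) (h : a * (r * r) + b * r + c = 0) :
    (∃ f g : R[X], ¬IsUnit f ∧ ¬IsUnit g ∧ C c + C b * X + C a * X ^ 2 = f * g) ∧
      IsSquare (discrim a b c) := by
  have hfac : C c + C b * X + C a * X ^ 2 = (X - C r) * (C a * X + C (a * r + b)) := by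
    have hC := congrArg C h
    simp only [map_add, map_mul, map_zero] at hC ⊢
    linear_combination hC
  refine ⟨⟨_, _, not_isUnit_X_sub_C r, not_isUnit_of_degree_pos _ ?_, hfac⟩,
    ⟨_, (discrim_eq_sq_of_quadratic_eq_zero h).trans (sq _)⟩⟩
  rw [degree_linear ha]
  exact zero_lt_one

theorem stmt_11_general (p : ℕ) [Fact p.Prime] (ℓ : ℕ) (α β : ℤ)
    (hα : Int.gcd (p : ℤ) α = 1)
    (h : ∃ a b : PowerSeries ℤ, ¬ IsUnit a ∧ ¬ IsUnit b ∧
      (PowerSeries.C : ℤ →+* PowerSeries ℤ) ((p : ℤ) ^ 2) +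
        (PowerSeries.C : ℤ →+* PowerSeries ℤ) ((p : ℤ) ^ ℓ * β) * PowerSeries.X +
        (PowerSeries.C : ℤ →+* PowerSeries ℤ) α * PowerSeries.X ^ 2 = a * b) :
    (∃ a b : Polynomial ℤ_[p], ¬ IsUnit a ∧ ¬ IsUnit b ∧
      Polynomial.C ((p : ℤ_[p]) ^ 2) +
        Polynomial.C ((p : ℤ_[p]) ^ ℓ * (β : ℤ_[p])) * Polynomial.X +
        Polynomial.C (α : ℤ_[p]) * Polynomial.X ^ 2 = a * b) ∧
    IsSquare ((p : ℤ_[p]) ^ (2 * ℓ) * (β : ℤ_[p]) ^ 2 - 4 * (α : ℤ_[p]) * (p : ℤ_[p]) ^ 2) := by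
  obtain ⟨a, b, ha, hb, hab⟩ := h
  have hp : Prime (p : ℤ) := Nat.prime_iff_prime_int.mp Fact.out
  have hpα : ¬(p : ℤ) ∣ α := fun hd =>
    hp.not_isUnit ((Int.isCoprime_iff_gcd_eq_one.mpr hα).isUnit_of_dvd' dvd_rfl hd)
  have hF : a * b = ((C ((p : ℤ) ^ 2) + C ((p : ℤ) ^ ℓ * β) * X + C α * X ^ 2 : ℤ[X]) :
      PowerSeries ℤ) := by
    rw [← hab]
    simp only [Polynomial.coe_add, Polynomial.coe_mul, Polynomial.coe_pow, Polynomial.coe_C,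
      Polynomial.coe_X]
  have hα₂ : PowerSeries.coeff 2 (a * b) = α := by
    rw [hF, Polynomial.coeff_coe]
    simp only [coeff_add, coeff_C_mul_X_pow, coeff_C_mul_X, coeff_C]
    norm_num
  obtain ⟨ha₀, ha₁⟩ := PowerSeries.dvd_constantCoeff_and_not_dvd_coeff_one_of_mul hp ha hb
    (by rw [← hab]; simp) (hα₂ ▸ hpα)
  obtain ⟨r, hr⟩ := PadicInt.exists_aeval_eq_zero_of_mul_eq hF ha₀ ha₁
  have hr' : (α : ℤ_[p]) * (r * r) + (p : ℤ_[p]) ^ ℓ * β * r + (p : ℤ_[p]) ^ 2 = 0 := by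
    simp only [eq_intCast, map_add, map_pow, map_natCast, map_mul, map_intCast, aeval_X] at hr
    linear_combination hr
  have hα0 : (α : ℤ_[p]) ≠ 0 := Int.cast_ne_zero.mpr fun h0 => hpα (h0 ▸ dvd_zero _)
  obtain ⟨hfac, hsq⟩ := exists_factorization_and_isSquare_discrim_of_root hα0 hr'
  refine ⟨hfac, ?_⟩
  convert hsq using 1
  rw [discrim]
  ring

theorem stmt_11 (p : ℕ) [Fact p.Prime] (hodd : Odd p) (ℓ : ℕ) (hℓ : 1 ≤ ℓ) (α β : ℤ)
    (hα : Int.gcd (p : ℤ) α = 1) (hβ : Int.gcd (p : ℤ) β = 1)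
    (h : ∃ a b : PowerSeries ℤ, ¬ IsUnit a ∧ ¬ IsUnit b ∧
      (PowerSeries.C : ℤ →+* PowerSeries ℤ) ((p : ℤ) ^ 2) +
        (PowerSeries.C : ℤ →+* PowerSeries ℤ) ((p : ℤ) ^ ℓ * β) * PowerSeries.X +
        (PowerSeries.C : ℤ →+* PowerSeries ℤ) α * PowerSeries.X ^ 2 = a * b) :
    (∃ a b : Polynomial ℤ_[p], ¬ IsUnit a ∧ ¬ IsUnit b ∧
      Polynomial.C ((p : ℤ_[p]) ^ 2) +
        Polynomial.C ((p : ℤ_[p]) ^ ℓ * (β : ℤ_[p])) * Polynomial.X +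
        Polynomial.C (α : ℤ_[p]) * Polynomial.X ^ 2 = a * b) ∧
    IsSquare ((p : ℤ_[p]) ^ (2 * ℓ) * (β : ℤ_[p]) ^ 2 - 4 * (α : ℤ_[p]) * (p : ℤ_[p]) ^ 2) :=
  stmt_11_general p ℓ α β hα h
end
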